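/- arXiv:math/0111305 — 4 statements merged into one kernel-verified Lean document; each statement's English description precedes it below -/
import Mathlib

section
/- Let (Y_k) be the simple symmetric random walk on Z started at 0. Then for every δ₁ > 0 there is a constant c > 0 such that for all large n, P(max_{0≤k≤2n} |Y_k| ≥ n^{1/2+δ₁} | Y_{2n} = 0) ≤ 2 exp(-n^{2δ₁}). -/
/-!
Almost surely every increment is `±1`, so the first `2n` steps are determined by the set of
times of up-steps, and by independence each such set has probability `2⁻²ⁿ`: both events are
counted by lattice paths. Let `M = ⌈n^{1/2+δ₁}⌉`. A path from `0` to `0` with `max |Y_k| ≥ M`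
hits `M` or `-M`; reflecting it after the first hitting time is injective and yields a path
ending at `±2M`, so there are at most `2 C(2n, n+M)` such paths against `C(2n, n)` in all.
Finally `C(2n, n) / C(2n, n+M) = ∏_{j<M} (1 + d_j) / (1 - d_j)` with `d_j = (2j+1)/(2n+1)`, and
`log ((1 + d) / (1 - d)) ≥ 2d + 2d³/3` bounds its logarithm below by
`2M²/(2n+1) + 2M⁴/(3(2n+1)³) ≥ n^{2δ₁}` as soon as `n^{2δ₁} ≥ 10`.
-/

open MeasureTheory ProbabilityTheory Finset
open scoped ENNReal symmDiff

def rwY (ψ : ℕ → Ω → ℤ) (n : ℕ) (ω : Ω) : ℤ :=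
  ∑ k ∈ Finset.range n, ψ k ω

theorem Int.exists_eq_of_le_of_add_one_le {f : ℕ → ℤ} (hf : ∀ k, f (k + 1) ≤ f k + 1)
    {K : ℕ} {L : ℤ} (h0 : f 0 ≤ L) (hK : L ≤ f K) : ∃ k ≤ K, f k = L := by
  induction K with
  | zero => exact ⟨0, le_rfl, le_antisymm h0 hK⟩
  | succ K ih =>
    by_cases hL : L ≤ f K
    · obtain ⟨k, hk, rfl⟩ := ih hL
      exact ⟨k, by omega, rfl⟩
    · exact ⟨K + 1, le_rfl, by linarith [hf K]⟩

namespace LatticePath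

/-- A `±1` path is encoded by the set `s` of times of its up-steps. -/
def step (s : Finset ℕ) (j : ℕ) : ℤ := if j ∈ s then 1 else -1

def height (s : Finset ℕ) (k : ℕ) : ℤ := ∑ j ∈ range k, step s j

variable {s : Finset ℕ} {j k m t : ℕ}

@[simp] lemma height_zero (s : Finset ℕ) : height s 0 = 0 := by simp [height]

lemma height_succ (s : Finset ℕ) (k : ℕ) : height s (k + 1) = height s k + step s k :=
  sum_range_succ _ _

lemma step_eq_one_iff : step s j = 1 ↔ j ∈ s := by
  unfold step; split_ifs <;> simp [*]

lemma abs_step (s : Finset ℕ) (j : ℕ) : |step s j| = 1 := by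
  unfold step; split_ifs <;> simp

lemma abs_height_succ_le (s : Finset ℕ) (k : ℕ) : |height s (k + 1)| ≤ |height s k| + 1 := by
  rw [height_succ, ← abs_step s k]
  exact abs_add_le _ _

lemma height_eq_of_subset_range (hs : s ⊆ range m) : height s m = 2 * #s - m := by
  have hstep : ∀ j, step s j = 2 * (if j ∈ s then 1 else 0) - 1 := by
    intro j; unfold step; split_ifs <;> norm_num
  simp only [height, hstep, sum_sub_distrib, ← mul_sum, sum_boole, sum_const, card_range,
    filter_mem_eq_inter, inter_eq_right.2 hs, nsmul_eq_mul, mul_one]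

theorem card_height_eq (m t : ℕ) {z : ℤ} (hz : 2 * (t : ℤ) - m = z) :
    #{s ∈ (range m).powerset | height s m = z} = m.choose t := by
  conv_rhs => rw [← card_range m, ← card_powersetCard, powersetCard_eq_filter]
  refine congrArg card (filter_congr fun s hs => ?_)
  rw [height_eq_of_subset_range (mem_powerset.1 hs), ← hz]
  omega

lemma height_range_sdiff (hk : k ≤ m) :
    height (range m \ s) k = -height s k := by
  rw [height, height, ← sum_neg_distrib]
  refine sum_congr rfl fun j hj => ?_
  have hjm : j ∈ range m := mem_range.2 (by have := mem_range.1 hj; omega)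
  unfold step
  by_cases hjs : j ∈ s <;> simp [hjs, hjm]

theorem card_height_neg (m : ℕ) (z : ℤ) :
    #{s ∈ (range m).powerset | height s m = -z} = #{s ∈ (range m).powerset | height s m = z} := by
  refine card_nbij' (range m \ ·) (range m \ ·) ?_ ?_ ?_ ?_ <;>
    simp only [coe_filter, Set.MapsTo, Set.LeftInvOn, Set.mem_ofPred_eq, mem_powerset] <;>
    intro s ⟨hs, hz⟩
  · exact ⟨sdiff_subset, by rw [height_range_sdiff le_rfl, hz, neg_neg]⟩
  · exact ⟨sdiff_subset, by rw [height_range_sdiff le_rfl, hz]⟩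
  · exact Finset.sdiff_sdiff_eq_self hs
  · exact Finset.sdiff_sdiff_eq_self hs

lemma height_symmDiff_Ico_of_le (hk : k ≤ t) : height (s ∆ Ico t m) k = height s k := by
  refine sum_congr rfl fun j hj => ?_
  have : j ∉ Ico t m := fun h => by have := mem_range.1 hj; have := (mem_Ico.1 h).1; omega
  simp [step, mem_symmDiff, this]

lemma step_symmDiff_Ico (htj : t ≤ j) (hjm : j < m) : step (s ∆ Ico t m) j = -step s j := by
  have : j ∈ Ico t m := mem_Ico.2 ⟨htj, hjm⟩
  unfold step
  by_cases hjs : j ∈ s <;> simp [mem_symmDiff, hjs, this]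

lemma height_symmDiff_Ico (htk : t ≤ k) (hkm : k ≤ m) :
    height (s ∆ Ico t m) k = 2 * height s t - height s k := by
  induction k, htk using Nat.le_induction with
  | base => rw [height_symmDiff_Ico_of_le le_rfl]; ring
  | succ k htk ih =>
    rw [height_succ, height_succ, ih (by omega), step_symmDiff_Ico htk (by omega)]
    ring

open scoped Classical in
noncomputable def reflectAt (L : ℤ) (m : ℕ) (s : Finset ℕ) : Finset ℕ :=
  if h : ∃ k, height s k = L then s ∆ Ico (Nat.find h) m else s

section Reflection

open scoped Classical

variable {L : ℤ}

lemma reflectAt_of_exists (h : ∃ k, height s k = L) :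
    reflectAt L m s = s ∆ Ico (Nat.find h) m := dif_pos h

lemma height_reflectAt_of_le (h : ∃ k, height s k = L) (hk : k ≤ Nat.find h) :
    height (reflectAt L m s) k = height s k := by
  rw [reflectAt_of_exists h, height_symmDiff_Ico_of_le hk]

lemma exists_height_reflectAt (h : ∃ k, height s k = L) : ∃ k, height (reflectAt L m s) k = L :=
  ⟨Nat.find h, (height_reflectAt_of_le h le_rfl).trans (Nat.find_spec h)⟩

/-- The reflected path agrees with `s` up to the first hitting time of `L`, so that hitting time
is unchanged and reflecting twice gives back `s`. -/
lemma reflectAt_reflectAt (h : ∃ k, height s k = L) : reflectAt L m (reflectAt L m s) = s := by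
  have h' := exists_height_reflectAt (m := m) h
  have hfind : Nat.find h' = Nat.find h := by
    refine le_antisymm (Nat.find_min' h' ?_) ?_
    · exact (height_reflectAt_of_le h le_rfl).trans (Nat.find_spec h)
    · refine Nat.find_min' h ?_
      rw [← height_reflectAt_of_le h ?_]
      · exact Nat.find_spec h'
      · exact Nat.find_min' h' ((height_reflectAt_of_le h le_rfl).trans (Nat.find_spec h))
  rw [reflectAt_of_exists h', hfind, reflectAt_of_exists h, symmDiff_symmDiff_cancel_right]

lemma height_reflectAt (h : ∃ k ≤ m, height s k = L) :
    height (reflectAt L m s) m = 2 * L - height s m := by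
  obtain ⟨k, hkm, hk⟩ := h
  have h' : ∃ k, height s k = L := ⟨k, hk⟩
  rw [reflectAt_of_exists h', height_symmDiff_Ico ((Nat.find_min' h' hk).trans hkm) le_rfl,
    Nat.find_spec h']

lemma reflectAt_subset_range (hs : s ⊆ range m) : reflectAt L m s ⊆ range m := by
  unfold reflectAt
  split_ifs
  · refine symmDiff_subset_union.trans (union_subset hs fun j hj => ?_)
    exact mem_range.2 (mem_Ico.1 hj).2
  · exact hs

end Reflection

theorem card_hit_end_le (m : ℕ) (L z : ℤ) :
    #{s ∈ (range m).powerset | (∃ k ≤ m, height s k = L) ∧ height s m = z} ≤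
      #{s ∈ (range m).powerset | height s m = 2 * L - z} := by
  refine card_le_card_of_injOn (reflectAt L m) (fun s hs => ?_) (fun s hs s' hs' he => ?_)
  · simp only [coe_filter, mem_powerset, Set.mem_ofPred_eq] at hs ⊢
    obtain ⟨hsm, hhit, rfl⟩ := hs
    exact ⟨reflectAt_subset_range hsm, height_reflectAt hhit⟩
  · simp only [coe_filter, mem_powerset, Set.mem_ofPred_eq] at hs hs'
    obtain ⟨-, ⟨k, -, hk⟩, -⟩ := hs
    obtain ⟨-, ⟨k', -, hk'⟩, -⟩ := hs'
    rw [← reflectAt_reflectAt ⟨k, hk⟩, he, reflectAt_reflectAt ⟨k', hk'⟩]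

theorem card_excursion_le (n M : ℕ) :
    #{s ∈ (range (2 * n)).powerset |
        (∃ k ≤ 2 * n, (M : ℤ) ≤ |height s k|) ∧ height s (2 * n) = 0} ≤
      2 * (2 * n).choose (n + M) := by
  set P := (range (2 * n)).powerset
  have hsplit : {s ∈ P | (∃ k ≤ 2 * n, (M : ℤ) ≤ |height s k|) ∧ height s (2 * n) = 0} ⊆
      {s ∈ P | (∃ k ≤ 2 * n, height s k = M) ∧ height s (2 * n) = 0} ∪
        {s ∈ P | (∃ k ≤ 2 * n, height s k = -M) ∧ height s (2 * n) = 0} := by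
    intro s hs
    simp only [mem_union, mem_filter] at hs ⊢
    obtain ⟨hsP, ⟨k, hkn, hk⟩, hend⟩ := hs
    obtain ⟨k', hk'k, hk'⟩ :=
      Int.exists_eq_of_le_of_add_one_le (abs_height_succ_le s) (by simp) hk
    rcases (abs_eq (Int.natCast_nonneg M)).1 hk' with h | h
    · exact .inl ⟨hsP, ⟨k', hk'k.trans hkn, h⟩, hend⟩
    · exact .inr ⟨hsP, ⟨k', hk'k.trans hkn, h⟩, hend⟩
  have hend : #{s ∈ P | height s (2 * n) = 2 * M} = (2 * n).choose (n + M) :=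
    card_height_eq _ _ (by push_cast; ring)
  calc _ ≤ _ := card_le_card hsplit
    _ ≤ _ := card_union_le _ _
    _ ≤ #{s ∈ P | height s (2 * n) = 2 * M - 0} + #{s ∈ P | height s (2 * n) = 2 * -M - 0} :=
      add_le_add (card_hit_end_le _ _ _) (card_hit_end_le _ _ _)
    _ = 2 * (2 * n).choose (n + M) := by
      rw [sub_zero, sub_zero, mul_neg, card_height_neg, hend]; ring

end LatticePath

section Walk

variable {Ω : Type*} {ψ : ℕ → Ω → ℤ} {m : ℕ}

def upSteps (ψ : ℕ → Ω → ℤ) (m : ℕ) (ω : Ω) : Finset ℕ := {j ∈ range m | ψ j ω = 1}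

lemma rwY_eq_height {ω : Ω} (hω : ∀ j, ψ j ω = 1 ∨ ψ j ω = -1) {k : ℕ} (hk : k ≤ m) :
    rwY ψ k ω = LatticePath.height (upSteps ψ m ω) k := by
  refine sum_congr rfl fun j hj => ?_
  have hjm : j < m := (mem_range.1 hj).trans_le hk
  rcases hω j with h | h <;> simp [LatticePath.step, upSteps, h, hjm]

lemma upSteps_eq_iff {ω : Ω} (hω : ∀ j, ψ j ω = 1 ∨ ψ j ω = -1) {s : Finset ℕ}
    (hs : s ⊆ range m) : upSteps ψ m ω = s ↔ ∀ j ∈ range m, ψ j ω = LatticePath.step s j := by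
  constructor
  · rintro rfl j hj
    rcases hω j with h | h <;> simp [LatticePath.step, upSteps, h, mem_range.1 hj]
  · intro h
    ext j
    by_cases hj : j ∈ range m
    · simp only [upSteps, mem_filter, hj, true_and, h j hj, LatticePath.step_eq_one_iff]
    · simp only [upSteps, mem_filter, hj, false_and, false_iff]
      exact fun h' => hj (hs h')

variable [MeasurableSpace Ω] {μ : Measure Ω}

lemma measurable_upSteps (hmeas : ∀ j, Measurable (ψ j)) : Measurable (upSteps ψ m) := by
  refine measurable_finset_iff.2 fun j => ?_
  simp only [upSteps, mem_filter]
  exact measurable_const.and (measurableSet_setOfPred.1 (hmeas j (measurableSet_singleton 1)))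

variable [IsProbabilityMeasure μ]

lemma ae_eq_one_or_eq_neg_one (hmeas : ∀ j, Measurable (ψ j))
    (h1 : ∀ j, μ {ω | ψ j ω = 1} = 1 / 2) (h2 : ∀ j, μ {ω | ψ j ω = -1} = 1 / 2) :
    ∀ᵐ ω ∂μ, ∀ j, ψ j ω = 1 ∨ ψ j ω = -1 := by
  refine ae_all_iff.2 fun j => ?_
  have hmeas1 : MeasurableSet {ω | ψ j ω = 1} := hmeas j (measurableSet_singleton 1)
  have hmeas2 : MeasurableSet {ω | ψ j ω = -1} := hmeas j (measurableSet_singleton (-1))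
  have hdisj : Disjoint {ω | ψ j ω = 1} {ω | ψ j ω = -1} :=
    Set.disjoint_left.2 fun ω (h : ψ j ω = 1) (h' : ψ j ω = -1) => by rw [h] at h'; norm_num at h'
  refine (prob_compl_eq_zero_iff (hmeas1.union hmeas2)).2 ?_
  rw [measure_union hdisj hmeas2, h1, h2, ENNReal.add_halves]

variable (hmeas : ∀ j, Measurable (ψ j)) (hindep : iIndepFun ψ μ)
  (h1 : ∀ j, μ {ω | ψ j ω = 1} = 1 / 2) (h2 : ∀ j, μ {ω | ψ j ω = -1} = 1 / 2)
include hmeas hindep h1 h2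

lemma measure_upSteps_eq {s : Finset ℕ} (hs : s ⊆ range m) :
    μ (upSteps ψ m ⁻¹' {s}) = 2⁻¹ ^ m := by
  calc μ (upSteps ψ m ⁻¹' {s})
      = μ (⋂ j ∈ range m, {ω | ψ j ω = LatticePath.step s j}) := by
        refine measure_congr (Filter.eventuallyEq_set.2 ?_)
        filter_upwards [ae_eq_one_or_eq_neg_one hmeas h1 h2] with ω hω
        simp only [Set.mem_preimage, Set.mem_singleton_iff, Set.mem_ofPred_eq, Set.mem_iInter,
          upSteps_eq_iff hω hs]
    _ = ∏ j ∈ range m, μ {ω | ψ j ω = LatticePath.step s j} :=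
        hindep.meas_biInter fun j _ => ⟨{LatticePath.step s j}, measurableSet_singleton _, rfl⟩
    _ = 2⁻¹ ^ m := by
        rw [prod_congr rfl fun j _ => ?_, prod_const, card_range]
        unfold LatticePath.step
        split_ifs
        · rw [h1, one_div]
        · rw [h2, one_div]

theorem measure_upSteps (P : Finset ℕ → Prop) [DecidablePred P] :
    μ {ω | P (upSteps ψ m ω)} = #{s ∈ (range m).powerset | P s} * 2⁻¹ ^ m := by
  have hpre : {ω | P (upSteps ψ m ω)} = upSteps ψ m ⁻¹' ↑{s ∈ (range m).powerset | P s} := by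
    ext ω
    simp [upSteps, filter_subset]
  rw [hpre, ← sum_measure_preimage_singleton _
    fun s _ => measurable_upSteps hmeas (measurableSet_singleton s)]
  rw [sum_congr rfl fun s hs => measure_upSteps_eq hmeas hindep h1 h2
    (mem_powerset.1 (mem_filter.1 hs).1), sum_const, nsmul_eq_mul]

theorem measure_rwY_eq {t : ℕ} {z : ℤ} (hz : 2 * (t : ℤ) - m = z) :
    μ {ω | rwY ψ m ω = z} = m.choose t * 2⁻¹ ^ m := by
  rw [← LatticePath.card_height_eq m t hz, ← measure_upSteps hmeas hindep h1 h2]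
  refine measure_congr (Filter.eventuallyEq_set.2 ?_)
  filter_upwards [ae_eq_one_or_eq_neg_one hmeas h1 h2] with ω hω
  simp only [rwY_eq_height (m := m) hω le_rfl]

theorem measure_excursion_inter_rwY_eq {x : ℝ} (hx : 0 ≤ x) (z : ℤ) :
    μ ({ω | ∃ k ≤ m, x ≤ (|rwY ψ k ω| : ℝ)} ∩ {ω | rwY ψ m ω = z}) =
      #{s ∈ (range m).powerset | (∃ k ≤ m, (⌈x⌉₊ : ℤ) ≤ |LatticePath.height s k|) ∧
        LatticePath.height s m = z} * 2⁻¹ ^ m := by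
  rw [← measure_upSteps hmeas hindep h1 h2]
  refine measure_congr (Filter.eventuallyEq_set.2 ?_)
  filter_upwards [ae_eq_one_or_eq_neg_one hmeas h1 h2] with ω hω
  simp only [Set.mem_inter_iff, Set.mem_ofPred_eq, rwY_eq_height (m := m) hω le_rfl]
  refine and_congr_left' (exists_congr fun k => and_congr_right fun hk => ?_)
  rw [rwY_eq_height hω hk, Int.natCast_ceil_eq_ceil hx, Int.ceil_le, Int.cast_abs]

end Walk

open Real

theorem Nat.choose_add_mul_prod (m k M : ℕ) :
    m.choose (k + M) * ∏ j ∈ range M, (k + j + 1) = m.choose k * ∏ j ∈ range M, (m - k - j) := by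
  induction M with
  | zero => simp
  | succ M ih =>
    calc m.choose (k + (M + 1)) * ∏ j ∈ range (M + 1), (k + j + 1)
        = m.choose (k + M + 1) * (k + M + 1) * ∏ j ∈ range M, (k + j + 1) := by
          rw [prod_range_succ]; ring_nf
      _ = m.choose (k + M) * (∏ j ∈ range M, (k + j + 1)) * (m - k - M) := by
          rw [Nat.choose_succ_right_eq, Nat.sub_sub]; ring
      _ = m.choose k * ∏ j ∈ range (M + 1), (m - k - j) := by
          rw [ih, prod_range_succ]; ring

theorem Real.two_mul_add_le_log_sub_log {d : ℝ} (h0 : 0 ≤ d) (h1 : d < 1) :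
    2 * d + 2 / 3 * d ^ 3 ≤ log (1 + d) - log (1 - d) := by
  have := sum_le_hasSum (range 2) (fun k _ => by positivity)
    (hasSum_log_sub_log_of_abs_lt_one (abs_lt.2 ⟨by linarith, h1⟩))
  norm_num [sum_range_succ] at this
  linarith

theorem Real.exp_two_mul_add_mul_one_sub_le {d : ℝ} (h0 : 0 ≤ d) (h1 : d < 1) :
    exp (2 * d + 2 / 3 * d ^ 3) * (1 - d) ≤ 1 + d := by
  have h1d : 0 < 1 - d := by linarith
  calc exp (2 * d + 2 / 3 * d ^ 3) * (1 - d)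
      ≤ exp (log (1 + d) - log (1 - d)) * (1 - d) := by
        gcongr; exact two_mul_add_le_log_sub_log h0 h1
    _ = 1 + d := by
        rw [exp_sub, exp_log (by linarith), exp_log h1d, div_mul_cancel₀ _ h1d.ne']

lemma sum_range_two_mul_add_one (M : ℕ) : ∑ j ∈ range M, (2 * (j : ℝ) + 1) = M ^ 2 := by
  induction M with
  | zero => simp
  | succ M ih => rw [sum_range_succ, ih]; push_cast; ring

lemma pow_four_le_sum_range_two_mul_add_one_pow_three (M : ℕ) :
    (M : ℝ) ^ 4 ≤ ∑ j ∈ range M, (2 * (j : ℝ) + 1) ^ 3 := by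
  induction M with
  | zero => simp
  | succ M ih =>
    rw [sum_range_succ]; push_cast
    have hM : (0 : ℝ) ≤ M := M.cast_nonneg
    nlinarith [pow_nonneg hM 3, sq_nonneg (M : ℝ)]

lemma le_sum_two_mul_add_two_thirds_mul_cube {n M : ℕ} {a : ℝ} (hn : 2 ≤ n) (ha : 10 ≤ a)
    (hM : a * n ≤ M ^ 2) :
    a ≤ ∑ j ∈ range M,
      (2 * ((2 * (j : ℝ) + 1) / (2 * n + 1)) + 2 / 3 * ((2 * (j : ℝ) + 1) / (2 * n + 1)) ^ 3) := by
  set N : ℝ := 2 * n + 1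
  have hN : 0 < N := by positivity
  have hn' : (2 : ℝ) ≤ n := by exact_mod_cast hn
  have hsum : ∑ j ∈ range M, (2 * ((2 * j + 1) / N) + 2 / 3 * ((2 * j + 1) / N) ^ 3) =
      2 / N * ∑ j ∈ range M, (2 * (j : ℝ) + 1) +
        2 / (3 * N ^ 3) * ∑ j ∈ range M, (2 * (j : ℝ) + 1) ^ 3 := by
    rw [mul_sum, mul_sum, ← sum_add_distrib]
    refine sum_congr rfl fun j _ => ?_
    field_simp
  rw [hsum, sum_range_two_mul_add_one]
  have hN2 : 3 * N ^ 2 ≤ 2 * a * n ^ 2 := by nlinarith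
  have han : 0 ≤ a * n := by positivity
  calc a = 2 / N * (a * n) + a / N := by field_simp; ring
    _ ≤ 2 / N * (a * n) + 2 / (3 * N ^ 3) * (a * n) ^ 2 := by
        -- the cubic term makes up for the deficit `a / N` of the linear one
        gcongr
        rw [div_le_iff₀ hN, show 2 / (3 * N ^ 3) * (a * n) ^ 2 * N =
          a * (2 * a * n ^ 2) / (3 * N ^ 2) by field_simp, le_div_iff₀ (by positivity)]
        nlinarith
    _ ≤ 2 / N * M ^ 2 + 2 / (3 * N ^ 3) * (M ^ 2) ^ 2 := by gcongr
    _ ≤ _ := by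
        rw [← pow_mul]
        gcongr
        exact pow_four_le_sum_range_two_mul_add_one_pow_three M

theorem exp_mul_choose_le {n M : ℕ} {a : ℝ} (hn : 2 ≤ n) (ha : 10 ≤ a) (hM : a * n ≤ M ^ 2) :
    exp a * (2 * n).choose (n + M) ≤ (2 * n).choose n := by
  rcases lt_or_ge n M with hnM | hMn
  · rw [Nat.choose_eq_zero_of_lt (by omega), Nat.cast_zero, mul_zero]
    positivity
  set d : ℕ → ℝ := fun j => (2 * (j : ℝ) + 1) / (2 * n + 1)
  have hgap : ∀ j ∈ range M, 0 < (n : ℝ) - j := fun j hj => by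
    have : (j : ℝ) + 1 ≤ n := by exact_mod_cast (mem_range.1 hj).trans_le hMn
    linarith
  have hterm : ∀ j ∈ range M, exp (2 * d j + 2 / 3 * d j ^ 3) * ((n : ℝ) - j) ≤ n + j + 1 := by
    intro j hj
    have hd1 : d j < 1 := (div_lt_one (by positivity)).2 (by linarith [hgap j hj])
    calc exp (2 * d j + 2 / 3 * d j ^ 3) * ((n : ℝ) - j)
        = exp (2 * d j + 2 / 3 * d j ^ 3) * (1 - d j) * ((2 * n + 1) / 2) := by
          simp only [d]; field_simp; ring
      _ ≤ (1 + d j) * ((2 * n + 1) / 2) := by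
          gcongr; exact exp_two_mul_add_mul_one_sub_le (by positivity) hd1
      _ = n + j + 1 := by simp only [d]; field_simp; ring
  have hid : ((2 * n).choose (n + M) : ℝ) * ∏ j ∈ range M, ((n : ℝ) + j + 1) =
      (2 * n).choose n * ∏ j ∈ range M, ((n : ℝ) - j) := by
    have := congrArg (Nat.cast (R := ℝ)) (Nat.choose_add_mul_prod (2 * n) n M)
    push_cast at this
    rw [this]
    congr 1
    refine prod_congr rfl fun j hj => ?_
    rw [Nat.cast_sub (by have := mem_range.1 hj; omega), Nat.cast_sub (by omega)]
    push_cast; ring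
  refine le_of_mul_le_mul_right ?_ (prod_pos hgap)
  calc exp a * (2 * n).choose (n + M) * ∏ j ∈ range M, ((n : ℝ) - j)
      ≤ exp (∑ j ∈ range M, (2 * d j + 2 / 3 * d j ^ 3)) * (2 * n).choose (n + M) *
          ∏ j ∈ range M, ((n : ℝ) - j) := by
        gcongr
        · exact (prod_pos hgap).le
        · exact le_sum_two_mul_add_two_thirds_mul_cube hn ha hM
    _ = (∏ j ∈ range M, (exp (2 * d j + 2 / 3 * d j ^ 3) * ((n : ℝ) - j))) *
          (2 * n).choose (n + M) := by
        rw [exp_sum, prod_mul_distrib]; ring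
    _ ≤ (∏ j ∈ range M, ((n : ℝ) + j + 1)) * (2 * n).choose (n + M) := by
        gcongr ?_ * _
        exact prod_le_prod (fun j hj => mul_nonneg (exp_pos _).le (hgap j hj).le) hterm
    _ = (2 * n).choose n * ∏ j ∈ range M, ((n : ℝ) - j) := by rw [mul_comm, hid]

/-- conditionally on `{Y_{2n} = 0}`, the probability that the walk exits
`[-n^{1/2+δ₁}, n^{1/2+δ₁}]` before time `2n` is at most `2 e^{-n^{2δ₁}}` for large `n`. -/
theorem max_excursion_conditional_bound
    {Ω : Type*} [MeasurableSpace Ω] (μ : Measure Ω) [IsProbabilityMeasure μ]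
    (ψ : ℕ → Ω → ℤ) (hmeas : ∀ n, Measurable (ψ n))
    (hindep : iIndepFun ψ μ)
    (h1 : ∀ n, μ {ω | ψ n ω = 1} = 1/2) (h2 : ∀ n, μ {ω | ψ n ω = -1} = 1/2) :
    ∀ δ₁ : ℝ, 0 < δ₁ → ∃ N : ℕ, ∀ n ≥ N,
      μ ({ω | ∃ k ≤ 2*n, ((n : ℝ) ^ ((1 : ℝ)/2 + δ₁)) ≤ (|rwY ψ k ω| : ℝ)}
          ∩ {ω | rwY ψ (2*n) ω = 0})
        ≤ ENNReal.ofReal (2 * Real.exp (-(n : ℝ) ^ (2 * δ₁)))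
            * μ {ω | rwY ψ (2*n) ω = 0} := by
  intro δ₁ hδ₁
  obtain ⟨N, hN⟩ := Filter.eventually_atTop.1 <| (Filter.eventually_ge_atTop 2).and <|
    ((tendsto_rpow_atTop (by linarith : 0 < 2 * δ₁)).comp
      tendsto_natCast_atTop_atTop).eventually_ge_atTop 10
  refine ⟨N, fun n hn => ?_⟩
  set x := (n : ℝ) ^ ((1 : ℝ) / 2 + δ₁)
  set a := (n : ℝ) ^ (2 * δ₁)
  set M := ⌈x⌉₊
  obtain ⟨hn2, ha : 10 ≤ a⟩ := hN n hn
  have hx0 : 0 ≤ x := by positivity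
  have hxa : x ^ 2 = a * n := by
    rw [← rpow_natCast, ← rpow_mul n.cast_nonneg,
      show (1 / 2 + δ₁) * ((2 : ℕ) : ℝ) = 2 * δ₁ + 1 by push_cast; ring,
      rpow_add (by positivity), rpow_one]
  rw [measure_excursion_inter_rwY_eq hmeas hindep h1 h2 hx0,
    measure_rwY_eq hmeas hindep h1 h2 (t := n) (by push_cast; ring), ← mul_assoc]
  gcongr ?_ * _
  rw [← ENNReal.ofReal_natCast, ← ENNReal.ofReal_natCast, ← ENNReal.ofReal_mul (by positivity)]
  refine ENNReal.ofReal_le_ofReal ?_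
  calc _ ≤ 2 * ((2 * n).choose (n + M) : ℝ) := by
        exact_mod_cast LatticePath.card_excursion_le n M
    _ = 2 * exp (-a) * (exp a * (2 * n).choose (n + M)) := by
        rw [exp_neg]; field_simp
    _ ≤ 2 * exp (-a) * (2 * n).choose n := by
        gcongr
        exact exp_mul_choose_le hn2 ha (hxa ▸ pow_le_pow_left₀ hx0 (Nat.le_ceil x) 2)
end

section
/- With notation as above, on the event B_n = {|Δ_n| > n^{1/2+δ₃}} (δ₃ > 0), for all large n one has the conditional large-deviation bound P(X_{2n} = 0 | F∨G) ≤ exp(-(m₁²/(4s²)) n^{2δ₃} + O(n^{3δ₃ - 1/2})), where m₁, s² are the mean and variance of the geometric jump law. -/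
open MeasureTheory ProbabilityTheory Finset Filter Real
open scoped ENNReal

/-!
Chernoff bound. For a tilt `d` with `|d| = t`, Markov's inequality and independence give
`P(X = 0) ≤ E e^{d X} = ∏_y M(d ε_y)^{η_y}`, where `M(s) = p / (1 - q e^s)` is the Laplace
transform of the geometric law. Near `0`, `log M(s) ≤ m₁ s + σ² s² / 2 + O(|s|³)` with
`m₁ = q / p` and `σ² = q / p²`, so choosing the sign of `d` opposite to that of `Δ` gives
`log P(X = 0) ≤ -m₁ t |Δ| + n σ² t² + O(n t³)`. With `t = (m₁ / 2σ²) n^{δ₃ - 1/2}` and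
`|Δ| > n^{1/2 + δ₃}` this is `-(m₁² / 4σ²) n^{2δ₃} + O(n^{3δ₃ - 1/2})`; when `δ₃ ≥ 1/2` the
claimed bound is at least `1` and there is nothing to prove.
-/

namespace Real

lemma neg_log_one_sub_le_cubic {x : ℝ} (hx : |x| ≤ 1 / 2) :
    -log (1 - x) ≤ x + x ^ 2 / 2 + 2 * |x| ^ 3 := by
  have h := abs_log_sub_add_sum_range_le (by linarith : |x| < 1) 2
  norm_num [Finset.sum_range_succ] at h
  have hcube : |x| ^ 3 / (1 - |x|) ≤ 2 * |x| ^ 3 := by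
    rw [div_le_iff₀ (by linarith)]
    nlinarith [pow_nonneg (abs_nonneg x) 3]
  linarith [(abs_le.1 h).1]

lemma exp_sub_one_le_cubic {s : ℝ} (hs : |s| ≤ 1) : exp s - 1 ≤ s + s ^ 2 / 2 + |s| ^ 3 := by
  have h := exp_bound hs (n := 3) (by norm_num)
  norm_num [Finset.sum_range_succ, Nat.factorial] at h
  nlinarith [(abs_le.1 h).2, pow_nonneg (abs_nonneg s) 3]

lemma sq_exp_sub_one_le {s : ℝ} (hs : |s| ≤ 1) : (exp s - 1) ^ 2 ≤ s ^ 2 + 3 * |s| ^ 3 := by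
  have h₁ := abs_exp_sub_one_le hs
  have h₂ := abs_exp_sub_one_sub_id_le hs
  have hsum : |exp s - 1 + s| ≤ 3 * |s| := (abs_add_le _ _).trans (by linarith)
  have := mul_le_mul h₂ hsum (abs_nonneg _) (sq_nonneg s)
  rw [← abs_mul, ← sq_abs s] at this
  nlinarith [le_abs_self ((exp s - 1 - s) * (exp s - 1 + s))]

end Real

lemma inv_one_sub_mul_exp_sub_one_le {a s : ℝ} (ha : 0 ≤ a) (hs₁ : |s| ≤ 1)
    (hs : a * |s| ≤ 1 / 4) :
    0 < 1 - a * (exp s - 1) ∧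
      (1 - a * (exp s - 1))⁻¹ ≤
        exp (a * s + (a + a ^ 2) / 2 * s ^ 2 + (a + 2 * a ^ 2 + 16 * a ^ 3) * |s| ^ 3) := by
  set u := exp s - 1
  have hu : |u| ≤ 2 * |s| := abs_exp_sub_one_le hs₁
  have hx : |a * u| ≤ 1 / 2 := by
    rw [abs_mul, abs_of_nonneg ha]; nlinarith
  have hpos : 0 < 1 - a * u := by linarith [le_abs_self (a * u)]
  refine ⟨hpos, ?_⟩
  rw [← exp_log (inv_pos.2 hpos), log_inv]
  gcongr
  have hu₃ : |u| ^ 3 ≤ 8 * |s| ^ 3 := by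
    have := pow_le_pow_left₀ (abs_nonneg u) hu 3
    linarith [show (2 * |s|) ^ 3 = 8 * |s| ^ 3 by ring]
  have hlin : a * u ≤ a * (s + s ^ 2 / 2 + |s| ^ 3) :=
    mul_le_mul_of_nonneg_left (exp_sub_one_le_cubic hs₁) ha
  have hquad : a ^ 2 * u ^ 2 ≤ a ^ 2 * (s ^ 2 + 3 * |s| ^ 3) :=
    mul_le_mul_of_nonneg_left (sq_exp_sub_one_le hs₁) (sq_nonneg a)
  have hcub : a ^ 3 * |u| ^ 3 ≤ a ^ 3 * (8 * |s| ^ 3) :=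
    mul_le_mul_of_nonneg_left hu₃ (by positivity)
  calc -log (1 - a * u) ≤ a * u + (a * u) ^ 2 / 2 + 2 * |a * u| ^ 3 := neg_log_one_sub_le_cubic hx
    _ = a * u + a ^ 2 * u ^ 2 / 2 + 2 * (a ^ 3 * |u| ^ 3) := by
      rw [abs_mul, abs_of_nonneg ha]; ring
    _ ≤ _ := by nlinarith [pow_nonneg (abs_nonneg s) 3, sq_nonneg a]

lemma geometric_mgf_le_exp {p q : ℝ} (hp : 0 < p) (hq₀ : 0 ≤ q) (hq : q = 1 - p) :
    ∃ K ≥ 0, ∃ t₀ > 0, ∀ s, |s| ≤ t₀ → q * exp s < 1 ∧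
      p / (1 - q * exp s) ≤ exp (q / p * s + q / p ^ 2 / 2 * s ^ 2 + K * |s| ^ 3) := by
  set a := q / p
  have ha : 0 ≤ a := by positivity
  refine ⟨a + 2 * a ^ 2 + 16 * a ^ 3, by positivity, 1 / (4 * (a + 1)), by positivity,
    fun s hs => ?_⟩
  have hs₁ : |s| ≤ 1 := hs.trans (by rw [div_le_one (by positivity)]; linarith)
  have has : a * |s| ≤ 1 / 4 := by
    rw [le_div_iff₀ (by positivity)] at hs
    nlinarith [abs_nonneg s]
  obtain ⟨hpos, hle⟩ := inv_one_sub_mul_exp_sub_one_le ha hs₁ has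
  have hfactor : 1 - q * exp s = p * (1 - a * (exp s - 1)) := by
    simp only [a]; field_simp; rw [hq]; ring
  have hvar : (a + a ^ 2) / 2 = q / p ^ 2 / 2 := by
    simp only [a]; field_simp; rw [hq]; ring
  refine ⟨by nlinarith, ?_⟩
  rwa [hfactor, div_mul_cancel_left₀ hp.ne', ← hvar]

lemma lintegral_exp_mul_of_geometric {Ω : Type*} [MeasurableSpace Ω] {μ : Measure Ω}
    {p q : ℝ} (hp : 0 ≤ p) (hq : 0 ≤ q) {X : Ω → ℕ} (hX : Measurable X)
    (hlaw : ∀ ℓ : ℕ, μ {ω | X ω = ℓ} = ENNReal.ofReal (p * q ^ ℓ)) {s : ℝ}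
    (hs : q * exp s < 1) :
    ∫⁻ ω, ENNReal.ofReal (exp (s * X ω)) ∂μ = ENNReal.ofReal (p / (1 - q * exp s)) := by
  have hr : 0 ≤ q * exp s := by positivity
  have hterm : ∀ ℓ : ℕ, ENNReal.ofReal (exp (s * ℓ)) * μ.map X {ℓ}
      = ENNReal.ofReal (p * (q * exp s) ^ ℓ) := by
    intro ℓ
    rw [Measure.map_apply hX (measurableSet_singleton ℓ)]
    simp only [Set.preimage, Set.mem_singleton_iff]
    rw [hlaw, ← ENNReal.ofReal_mul (exp_nonneg _), mul_comm s, exp_nat_mul]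
    ring_nf
  rw [← lintegral_map (f := fun k : ℕ => ENNReal.ofReal (exp (s * k))) measurable_from_nat hX,
    lintegral_countable', tsum_congr hterm,
    ← ENNReal.ofReal_tsum_of_nonneg (fun ℓ => by positivity)
      ((summable_geometric_of_lt_one hr hs).mul_left p),
    tsum_mul_left, tsum_geometric_of_lt_one hr hs, div_eq_mul_inv]

lemma measure_eq_zero_le_lintegral_exp {Ω : Type*} [MeasurableSpace Ω] {μ : Measure Ω}
    {Z : Ω → ℝ} (hZ : Measurable Z) (d : ℝ) :
    μ {ω | Z ω = 0} ≤ ∫⁻ ω, ENNReal.ofReal (exp (d * Z ω)) ∂μ := by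
  calc μ {ω | Z ω = 0} ≤ μ {ω | 1 ≤ ENNReal.ofReal (exp (d * Z ω))} :=
        measure_mono fun ω (hω : Z ω = 0) => by simp [hω]
    _ ≤ ∫⁻ ω, ENNReal.ofReal (exp (d * Z ω)) ∂μ := by
        simpa using mul_meas_ge_le_lintegral (μ := μ) (f := fun ω => ENNReal.ofReal (exp (d * Z ω)))
          (by fun_prop) 1

lemma lintegral_prod_prod_of_iIndepFun {Ω ι κ : Type*} [MeasurableSpace Ω] {μ : Measure Ω}
    [DecidableEq ι] [DecidableEq κ] {X : ι × κ → Ω → ℝ≥0∞} (hX : iIndepFun X μ)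
    (hXm : ∀ i, Measurable (X i)) (s : Finset κ) (t : κ → Finset ι) :
    ∫⁻ ω, ∏ y ∈ s, ∏ i ∈ t y, X (i, y) ω ∂μ = ∏ y ∈ s, ∏ i ∈ t y, ∫⁻ ω, X (i, y) ω ∂μ := by
  have hmem : ∀ z : ι × κ, z ∈ s.biUnion (fun y => t y ×ˢ {y}) ↔ z.2 ∈ s ∧ z.1 ∈ t z.2 := by
    rintro ⟨i, y⟩; simp [and_comm]
  rw [← prod_finset_product_right _ s t hmem (f := fun z => ∫⁻ ω, X z ω ∂μ),
    ← lintegral_prod_eq_prod_lintegral_of_indepFun _ X hX hXm]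
  exact lintegral_congr fun ω => (prod_finset_product_right _ s t hmem (f := (X · ω))).symm

lemma lintegral_exp_mul_walk {Ω κ : Type*} [MeasurableSpace Ω] {μ : Measure Ω} [DecidableEq κ]
    {p q : ℝ} (hp : 0 ≤ p) (hq : 0 ≤ q) {ξ : ℕ × κ → Ω → ℕ} (hξ : ∀ iy, Measurable (ξ iy))
    (hind : iIndepFun ξ μ)
    (hlaw : ∀ iy, ∀ ℓ : ℕ, μ {ω | ξ iy ω = ℓ} = ENNReal.ofReal (p * q ^ ℓ))
    (s : Finset κ) (η : κ → ℕ) (ε : κ → ℤ) {d : ℝ} (hd : ∀ y, q * exp (d * ε y) < 1) :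
    ∫⁻ ω, ENNReal.ofReal
        (exp (d * ((∑ y ∈ s, ε y * ∑ i ∈ range (η y), (ξ (i, y) ω : ℤ) : ℤ) : ℝ))) ∂μ
      = ∏ y ∈ s, ENNReal.ofReal (p / (1 - q * exp (d * ε y))) ^ η y := by
  set g : ℕ × κ → ℕ → ℝ≥0∞ := fun iy k => ENNReal.ofReal (exp (d * ε iy.2 * k))
  set X : ℕ × κ → Ω → ℝ≥0∞ := fun iy => g iy ∘ ξ iy
  have hXind : iIndepFun X μ := hind.comp g fun _ => measurable_from_nat
  have hX : ∀ ω, ENNReal.ofReal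
        (exp (d * ((∑ y ∈ s, ε y * ∑ i ∈ range (η y), (ξ (i, y) ω : ℤ) : ℤ) : ℝ)))
      = ∏ y ∈ s, ∏ i ∈ range (η y), X (i, y) ω := by
    intro ω
    have hsum : d * ((∑ y ∈ s, ε y * ∑ i ∈ range (η y), (ξ (i, y) ω : ℤ) : ℤ) : ℝ)
        = ∑ y ∈ s, ∑ i ∈ range (η y), d * ε y * ξ (i, y) ω := by
      push_cast; simp only [mul_sum, mul_assoc]
    simp only [hsum, exp_sum, X, g, Function.comp_apply]
    rw [ENNReal.ofReal_prod_of_nonneg fun _ _ => prod_nonneg fun _ _ => exp_nonneg _]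
    exact prod_congr rfl fun y _ => ENNReal.ofReal_prod_of_nonneg fun _ _ => exp_nonneg _
  simp_rw [hX]
  rw [lintegral_prod_prod_of_iIndepFun hXind fun iy => measurable_from_nat.comp (hξ iy)]
  refine prod_congr rfl fun y _ => ?_
  simp only [X, g, Function.comp_def]
  rw [prod_congr rfl fun i _ =>
    lintegral_exp_mul_of_geometric hp hq (hξ (i, y)) (hlaw (i, y)) (hd y), prod_const, card_range]

lemma measure_walk_eq_zero_le_exp {Ω κ : Type*} [MeasurableSpace Ω] {μ : Measure Ω}
    [DecidableEq κ] {p q m v K t₀ t : ℝ} (hp : 0 ≤ p) (hq : 0 ≤ q)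
    {ξ : ℕ × κ → Ω → ℕ} (hξ : ∀ iy, Measurable (ξ iy)) (hind : iIndepFun ξ μ)
    (hlaw : ∀ iy, ∀ ℓ : ℕ, μ {ω | ξ iy ω = ℓ} = ENNReal.ofReal (p * q ^ ℓ))
    (hM : ∀ s, |s| ≤ t₀ → q * exp s < 1 ∧
      p / (1 - q * exp s) ≤ exp (m * s + v / 2 * s ^ 2 + K * |s| ^ 3))
    (s : Finset κ) (η : κ → ℕ) {ε : κ → ℤ} (hε : ∀ y, ε y = 1 ∨ ε y = -1)
    (ht : 0 ≤ t) (ht₀ : t ≤ t₀) :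
    μ {ω | (∑ y ∈ s, ε y * ∑ i ∈ range (η y), (ξ (i, y) ω : ℤ) : ℤ) = 0}
      ≤ ENNReal.ofReal (exp (-(m * t * |((∑ y ∈ s, ε y * (η y : ℤ) : ℤ) : ℝ)|)
          + (∑ y ∈ s, η y : ℕ) * (v / 2 * t ^ 2 + K * t ^ 3))) := by
  set Δ : ℝ := ((∑ y ∈ s, ε y * (η y : ℤ) : ℤ) : ℝ)
  obtain ⟨σ, hσ, hσΔ⟩ : ∃ σ : ℝ, |σ| = 1 ∧ σ * Δ = |Δ| := by
    rcases le_total 0 Δ with h | h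
    · exact ⟨1, by simp, by simp [abs_of_nonneg h]⟩
    · exact ⟨-1, by simp, by simp [abs_of_nonpos h]⟩
  set d := -(t * σ)
  have hd : ∀ y, |d * ε y| = t := fun y => by
    rcases hε y with h | h <;> simp [d, h, abs_mul, hσ, abs_of_nonneg ht]
  have hMd : ∀ y, q * exp (d * ε y) < 1 ∧
      p / (1 - q * exp (d * ε y)) ≤ exp (m * (d * ε y) + (v / 2 * t ^ 2 + K * t ^ 3)) := by
    intro y
    obtain ⟨hlt, hle⟩ := hM _ ((hd y).trans_le ht₀)
    rw [← sq_abs, hd y] at hle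
    exact ⟨hlt, hle.trans_eq (by ring_nf)⟩
  have hZ : Measurable fun ω =>
      ((∑ y ∈ s, ε y * ∑ i ∈ range (η y), (ξ (i, y) ω : ℤ) : ℤ) : ℝ) := by
    fun_prop
  calc μ {ω | (∑ y ∈ s, ε y * ∑ i ∈ range (η y), (ξ (i, y) ω : ℤ) : ℤ) = 0}
      = μ {ω | ((∑ y ∈ s, ε y * ∑ i ∈ range (η y), (ξ (i, y) ω : ℤ) : ℤ) : ℝ) = 0} := by
        simp only [Int.cast_eq_zero]
    _ ≤ ∫⁻ ω, ENNReal.ofReal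
          (exp (d * ((∑ y ∈ s, ε y * ∑ i ∈ range (η y), (ξ (i, y) ω : ℤ) : ℤ) : ℝ))) ∂μ :=
        measure_eq_zero_le_lintegral_exp hZ d
    _ = ∏ y ∈ s, ENNReal.ofReal (p / (1 - q * exp (d * ε y))) ^ η y :=
        lintegral_exp_mul_walk hp hq hξ hind hlaw s η ε fun y => (hMd y).1
    _ ≤ ∏ y ∈ s,
          ENNReal.ofReal (exp (η y * (m * (d * ε y) + (v / 2 * t ^ 2 + K * t ^ 3)))) := by
        refine prod_le_prod' fun y _ => ?_
        rw [exp_nat_mul, ENNReal.ofReal_pow (exp_nonneg _)]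
        gcongr
        exact (hMd y).2
    _ = _ := by
        have hlin : ∑ y ∈ s, (η y : ℝ) * (m * (d * ε y)) = -(m * t * |Δ|) := by
          rw [← hσΔ, show -(m * t * (σ * Δ)) = m * d * Δ by ring]
          simp only [Δ, Int.cast_sum, Int.cast_mul, Int.cast_natCast, mul_sum]
          exact sum_congr rfl fun y _ => by ring
        rw [← ENNReal.ofReal_prod_of_nonneg fun _ _ => exp_nonneg _, ← exp_sum]
        simp only [mul_add, sum_add_distrib, hlin, ← sum_mul, Nat.cast_sum]

lemma tilted_exponent_le {n m v K C δ X t : ℝ} (hn : 0 < n) (hm : 0 ≤ m) (hv : 0 < v)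
    (hX : n ^ ((1 : ℝ) / 2 + δ) < X) (ht : t = m / (2 * v) * n ^ (δ - 1 / 2))
    (hC : 2 * K * (m / (2 * v)) ^ 3 ≤ C) :
    -(m * t * X) + 2 * n * (v / 2 * t ^ 2 + K * t ^ 3)
      ≤ -(m ^ 2 / (4 * v)) * n ^ (2 * δ) + C * n ^ (3 * δ - 1 / 2) := by
  set w := n ^ (δ - 1 / 2)
  have h₁ : n ^ (2 * δ) = w * n ^ ((1 : ℝ) / 2 + δ) := by
    rw [← rpow_add hn]; ring_nf
  have h₂ : n ^ (2 * δ) = n * w ^ 2 := by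
    rw [show 2 * δ = 1 + (δ - 1 / 2) * 2 by ring, rpow_add hn, rpow_one, rpow_mul hn.le, rpow_two]
  have h₃ : n ^ (3 * δ - 1 / 2) = n * w ^ 3 := by
    rw [show 3 * δ - 1 / 2 = 2 * δ + (δ - 1 / 2) by ring, rpow_add hn, h₂]; ring
  have hfirst : m * t * n ^ ((1 : ℝ) / 2 + δ) ≤ m * t * X :=
    mul_le_mul_of_nonneg_left hX.le (by rw [ht]; positivity)
  have hdrift : m * t * n ^ ((1 : ℝ) / 2 + δ) = 2 * (m ^ 2 / (4 * v) * n ^ (2 * δ)) := by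
    rw [ht, h₁]; field_simp; ring
  have hvar : 2 * n * (v / 2 * t ^ 2 + K * t ^ 3)
      = m ^ 2 / (4 * v) * n ^ (2 * δ) + 2 * K * (m / (2 * v)) ^ 3 * n ^ (3 * δ - 1 / 2) := by
    rw [h₂, h₃, ht]; field_simp; ring
  have hcube : 2 * K * (m / (2 * v)) ^ 3 * n ^ (3 * δ - 1 / 2) ≤ C * n ^ (3 * δ - 1 / 2) := by
    gcongr
  linarith

lemma neg_mul_rpow_add_mul_rpow_nonneg {n A C δ : ℝ} (hn : 1 ≤ n) (hδ : 1 / 2 ≤ δ)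
    (hA : 0 ≤ A) (hC : A ≤ C) : 0 ≤ -A * n ^ (2 * δ) + C * n ^ (3 * δ - 1 / 2) := by
  have hpow : n ^ (2 * δ) ≤ n ^ (3 * δ - 1 / 2) := rpow_le_rpow_of_exponent_le hn (by linarith)
  nlinarith [mul_nonneg hA (sub_nonneg.2 hpow), rpow_nonneg (zero_le_one.trans hn) (2 * δ)]

theorem embedded_walk_large_deviation_on_Bn_general
    {Ω : Type*} [MeasurableSpace Ω] (μ : Measure Ω) [IsProbabilityMeasure μ]
    (p q : ℝ) (hp : 0 < p) (hp1 : p < 1) (hq : q = 1 - p)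
    (δ₃ : ℝ) :
    ∃ C : ℝ, 0 < C ∧ ∃ N : ℕ, ∀ n ≥ N,
      ∀ ξ : ℕ × ℤ → Ω → ℕ, (∀ iy, Measurable (ξ iy)) →
        iIndepFun ξ μ →
        (∀ iy, ∀ ℓ : ℕ, μ {ω | ξ iy ω = ℓ} = ENNReal.ofReal (p * q ^ ℓ)) →
      ∀ η : ℤ →₀ ℕ, (∑ y ∈ η.support, η y = 2 * n) →
      ∀ ε : ℤ → ℤ, (∀ y, ε y = 1 ∨ ε y = -1) →
        ((n : ℝ) ^ ((1 : ℝ)/2 + δ₃) < |((∑ y ∈ η.support, ε y * (η y : ℤ) : ℤ) : ℝ)|) →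
        μ {ω | (∑ y ∈ η.support, ε y * ∑ i ∈ Finset.range (η y), (ξ (i, y) ω : ℤ) : ℤ) = 0}
          ≤ ENNReal.ofReal
              (Real.exp (-((q / p) ^ 2 / (4 * (q / p ^ 2))) * (n : ℝ) ^ (2 * δ₃)
                + C * (n : ℝ) ^ (3 * δ₃ - 1/2))) := by
  have hq₀ : 0 < q := by linarith
  obtain ⟨K, hK, t₀, ht₀, hM⟩ := geometric_mgf_le_exp hp hq₀.le hq
  rcases lt_or_ge δ₃ (1 / 2) with hδ | hδ
  · -- `τ n^{δ₃-1/2}` minimises `-m₁ t n^{1/2+δ₃} + n σ² t²`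
    set τ := q / p / (2 * (q / p ^ 2))
    have hsmall : ∀ᶠ n : ℕ in atTop, τ * (n : ℝ) ^ (δ₃ - 1 / 2) ≤ t₀ := by
      have h := ((tendsto_rpow_neg_atTop (sub_pos.2 hδ)).comp
        tendsto_natCast_atTop_atTop).const_mul τ
      rw [mul_zero] at h
      simpa [neg_sub] using (h.eventually_lt_const ht₀).mono fun _ h => h.le
    obtain ⟨N, hN⟩ := eventually_atTop.1 hsmall
    refine ⟨2 * K * τ ^ 3 + 1, by positivity, max N 1,
      fun n hn ξ hξ hind hlaw η hη ε hε hΔ => ?_⟩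
    have hn₀ : (0 : ℝ) < n := by exact_mod_cast (le_max_right N 1).trans hn
    refine (measure_walk_eq_zero_le_exp hp.le hq₀.le hξ hind hlaw hM η.support η hε
      (by positivity) (hN n ((le_max_left N 1).trans hn))).trans ?_
    rw [hη, Nat.cast_mul, Nat.cast_two]
    exact ENNReal.ofReal_le_ofReal (exp_le_exp.2
      (tilted_exponent_le hn₀ (by positivity) (by positivity) hΔ rfl (by linarith)))
  · refine ⟨(q / p) ^ 2 / (4 * (q / p ^ 2)) + 1, by positivity, 1,
      fun n hn _ _ _ _ _ _ _ _ _ => prob_le_one.trans ?_⟩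
    rw [← ENNReal.ofReal_one]
    exact ENNReal.ofReal_le_ofReal (one_le_exp (neg_mul_rpow_add_mul_rpow_nonneg
      (by exact_mod_cast hn) hδ (by positivity) (by linarith)))

/-- on the event `B_n = {|Δ_n| > n^{1/2+δ₃}}`, the conditional
probability that the horizontal displacement vanishes satisfies the large-deviation
bound `P(X_{2n} = 0 | F∨G) ≤ exp(-(m₁²/(4s²)) n^{2δ₃} + O(n^{3δ₃-1/2}))`. -/
theorem embedded_walk_large_deviation_on_Bn
    {Ω : Type*} [MeasurableSpace Ω] (μ : Measure Ω) [IsProbabilityMeasure μ]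
    (p q : ℝ) (hp : 0 < p) (hp1 : p < 1) (hq : q = 1 - p)
    (δ₃ : ℝ) (hδ₃ : 0 < δ₃) :
    ∃ C : ℝ, 0 < C ∧ ∃ N : ℕ, ∀ n ≥ N,
      ∀ ξ : ℕ × ℤ → Ω → ℕ, (∀ iy, Measurable (ξ iy)) →
        iIndepFun ξ μ →
        (∀ iy, ∀ ℓ : ℕ, μ {ω | ξ iy ω = ℓ} = ENNReal.ofReal (p * q ^ ℓ)) →
      ∀ η : ℤ →₀ ℕ, (∑ y ∈ η.support, η y = 2 * n) →
      ∀ ε : ℤ → ℤ, (∀ y, ε y = 1 ∨ ε y = -1) →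
        ((n : ℝ) ^ ((1 : ℝ)/2 + δ₃) < |((∑ y ∈ η.support, ε y * (η y : ℤ) : ℤ) : ℝ)|) →
        μ {ω | (∑ y ∈ η.support, ε y * ∑ i ∈ Finset.range (η y), (ξ (i, y) ω : ℤ) : ℤ) = 0}
          ≤ ENNReal.ofReal
              (Real.exp (-((q / p) ^ 2 / (4 * (q / p ^ 2))) * (n : ℝ) ^ (2 * δ₃)
                + C * (n : ℝ) ^ (3 * δ₃ - 1/2))) :=
  embedded_walk_large_deviation_on_Bn_general μ p q hp hp1 hq δ₃
end

section
/- Let r(θ) = p/sqrt(p² + 2q(1-cosθ)) and suppose nonnegative integers (η(y))_{y∈Z} satisfy ∑_y η(y) = 2n and |∑_y (-1)^{s_y} η(y)| ≤ n^{1/2+δ₃} for some signs s_y. Then (1/2π) ∫_{-π}^{π} ∏_y χ(θ ε_y)^{η(y)} dθ = O(sqrt(log n / n)), where χ is the characteristic function of the geometric law of parameter p; equivalently, on A_n \ B_n one has P(X_{2n} = 0 | F∨G) = O(sqrt(log n / n)). -/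
open MeasureTheory Finset Real

/-!
Since `|χ(θ)|² = p² / (p² + 2q(1 - cos θ))` and `1 - cos θ ≥ 2θ²/π²` on `[-π, π]`, we get
`|χ(θ)|² ≤ (1 + cθ²)⁻¹` with `c = 4q/(π²p²)`. As `|ε_y| = 1`, the integrand has modulus
`|χ(θ)|^{2n} ≤ (1 + cθ²)^{-n} ≤ (1 + ncθ²)⁻¹` (Bernoulli), whose integral over `ℝ` is `π/√(nc)`.
This gives the stronger bound `O(n^{-1/2})`.
-/

/-- The characteristic function `χ(θ) = p/(1 - q e^{iθ})` of the geometric law. -/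
noncomputable def geomChar (p q θ : ℝ) : ℂ :=
  (p : ℂ) / (1 - (q : ℂ) * Complex.exp (θ * Complex.I))

lemma norm_geomChar_sq (p q θ : ℝ) :
    ‖geomChar p q θ‖ ^ 2 = p ^ 2 / (1 - 2 * q * cos θ + q ^ 2) := by
  have hden : ‖(1 : ℂ) - q * Complex.exp (θ * Complex.I)‖ ^ 2 = 1 - 2 * q * cos θ + q ^ 2 := by
    rw [Complex.exp_mul_I, ← Complex.ofReal_cos, ← Complex.ofReal_sin, Complex.sq_norm,
      Complex.normSq_apply]
    simp only [Complex.sub_re, Complex.sub_im, Complex.mul_re, Complex.mul_im, Complex.add_re,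
      Complex.add_im, Complex.ofReal_re, Complex.ofReal_im, Complex.I_re, Complex.I_im,
      Complex.one_re, Complex.one_im]
    nlinarith [sin_sq_add_cos_sq θ]
  rw [geomChar, norm_div, div_pow, hden, Complex.norm_real, Real.norm_eq_abs, sq_abs]

lemma norm_geomChar_neg (p q θ : ℝ) : ‖geomChar p q (-θ)‖ = ‖geomChar p q θ‖ := by
  rw [← sq_eq_sq₀ (norm_nonneg _) (norm_nonneg _), norm_geomChar_sq, norm_geomChar_sq, cos_neg]

lemma norm_geomChar_sq_le {p q θ : ℝ} (hp : p ≠ 0) (hq : q = 1 - p) (hq0 : 0 ≤ q)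
    (hθ : |θ| ≤ π) :
    ‖geomChar p q θ‖ ^ 2 ≤ (1 + 4 * q / (π ^ 2 * p ^ 2) * θ ^ 2)⁻¹ := by
  have hcos : 4 * q / π ^ 2 * θ ^ 2 ≤ 2 * q * (1 - cos θ) := by
    have := mul_le_mul_of_nonneg_left (cos_le_one_sub_mul_cos_sq hθ) hq0
    linarith [show q * (1 - 2 / π ^ 2 * θ ^ 2) = q - 2 * (q / π ^ 2 * θ ^ 2) by ring,
      show 4 * q / π ^ 2 * θ ^ 2 = 4 * (q / π ^ 2 * θ ^ 2) by ring]
  have hden : 1 - 2 * q * cos θ + q ^ 2 = p ^ 2 + 2 * q * (1 - cos θ) := by rw [hq]; ring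
  have hp2 : 0 < p ^ 2 := by positivity
  rw [norm_geomChar_sq, hden, ← one_div,
    div_le_div_iff₀ (by nlinarith [cos_le_one θ]) (by positivity)]
  calc p ^ 2 * (1 + 4 * q / (π ^ 2 * p ^ 2) * θ ^ 2) = p ^ 2 + 4 * q / π ^ 2 * θ ^ 2 := by
        field_simp
    _ ≤ 1 * (p ^ 2 + 2 * q * (1 - cos θ)) := by linarith

lemma inv_one_add_pow_le {x : ℝ} (hx : 0 ≤ x) (n : ℕ) : ((1 + x)⁻¹) ^ n ≤ (1 + n * x)⁻¹ := by
  rw [inv_pow]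
  exact inv_anti₀ (by positivity) (one_add_mul_le_pow (by linarith) n)

lemma norm_prod_geomChar_pow {ι : Type*} (p q θ : ℝ) (s : Finset ι) (η : ι → ℕ) (ε : ι → ℤ)
    (hε : ∀ y, ε y = 1 ∨ ε y = -1) :
    ‖∏ y ∈ s, geomChar p q (θ * ε y) ^ η y‖ = ‖geomChar p q θ‖ ^ ∑ y ∈ s, η y := by
  have hnorm : ∀ y, ‖geomChar p q (θ * ε y)‖ = ‖geomChar p q θ‖ := fun y => by
    rcases hε y with h | h <;> simp [h, norm_geomChar_neg]
  simp only [norm_prod, norm_pow, hnorm, prod_pow_eq_pow_sum]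

lemma integral_inv_one_add_mul_sq_le {a : ℝ} (ha : 0 < a) (b₁ b₂ : ℝ) :
    ∫ θ in b₁..b₂, (1 + a * θ ^ 2)⁻¹ ≤ π / √a := by
  have hsq : ∀ θ : ℝ, (1 + a * θ ^ 2)⁻¹ = (1 + (√a * θ) ^ 2)⁻¹ := fun θ => by
    rw [mul_pow, sq_sqrt ha.le]
  have hsa : 0 < √a := sqrt_pos.2 ha
  simp_rw [hsq]
  rw [intervalIntegral.integral_comp_mul_left (fun x : ℝ => (1 + x ^ 2)⁻¹) hsa.ne',
    integral_inv_one_add_sq, smul_eq_mul, inv_mul_eq_div]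
  gcongr
  linarith [arctan_lt_pi_div_two (√a * b₂), neg_pi_div_two_lt_arctan (√a * b₁)]

lemma inv_sqrt_le_sqrt_log_div {x : ℝ} (hx : exp 1 ≤ x) : 1 / √x ≤ √(log x / x) := by
  have hx0 : 0 < x := (exp_pos 1).trans_le hx
  have hlog : 1 ≤ log x := by rwa [le_log_iff_exp_le hx0]
  rw [sqrt_div (by linarith), one_div, ← one_div]
  gcongr
  rw [← sqrt_one]
  exact sqrt_le_sqrt hlog

theorem fourier_return_integral_bound_general
    (p q : ℝ) (hp : 0 < p) (hp1 : p < 1) (hq : q = 1 - p)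
    (δ₃ : ℝ) :
    ∃ C : ℝ, 0 < C ∧ ∃ N : ℕ, ∀ n ≥ N,
      ∀ η : ℤ →₀ ℕ, (∑ y ∈ η.support, η y = 2 * n) →
      ∀ ε : ℤ → ℤ, (∀ y, ε y = 1 ∨ ε y = -1) →
        (|((∑ y ∈ η.support, ε y * (η y : ℤ) : ℤ) : ℝ)| ≤ (n : ℝ) ^ ((1 : ℝ)/2 + δ₃)) →
        ‖(1 / (2 * (π : ℂ))) *
            ∫ θ in (-π : ℝ)..π, ∏ y ∈ η.support, (geomChar p q (θ * (ε y : ℝ))) ^ (η y)‖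
          ≤ C * Real.sqrt (Real.log n / n) := by
  set c := 4 * q / (π ^ 2 * p ^ 2)
  have hq0 : 0 < q := by linarith
  have hc : 0 < c := by positivity
  refine ⟨1 / (2 * √c), by positivity, 3, fun n hn η hη ε hε _ => ?_⟩
  have hn : exp 1 ≤ n := by
    have : (3 : ℝ) ≤ n := by exact_mod_cast hn
    linarith [exp_one_lt_d9]
  have hnc : 0 < n * c := mul_pos ((exp_pos 1).trans_le hn) hc
  have hdecay : ∀ θ ∈ Set.Ioc (-π) π,
      ‖∏ y ∈ η.support, geomChar p q (θ * ε y) ^ η y‖ ≤ (1 + n * c * θ ^ 2)⁻¹ := by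
    intro θ hθ
    rw [norm_prod_geomChar_pow p q θ _ _ _ hε, hη, pow_mul, mul_assoc]
    exact (pow_le_pow_left₀ (by positivity) (norm_geomChar_sq_le hp.ne' hq hq0.le
      (abs_le.2 ⟨hθ.1.le, hθ.2⟩)) n).trans (inv_one_add_pow_le (by positivity) n)
  have hintegral := (intervalIntegral.norm_integral_le_of_norm_le (by linarith [pi_pos])
    (ae_of_all _ hdecay)
    (Continuous.intervalIntegrable (by fun_prop (disch := intro; positivity)) _ _)).trans
    (integral_inv_one_add_mul_sq_le hnc (-π) π)
  rw [norm_mul, show ‖1 / (2 * (π : ℂ))‖ = 1 / (2 * π) by simp [abs_of_pos pi_pos]]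
  calc 1 / (2 * π) * ‖∫ θ in (-π)..π, ∏ y ∈ η.support, geomChar p q (θ * ε y) ^ η y‖
      ≤ 1 / (2 * π) * (π / √(n * c)) := by gcongr
    _ = 1 / (2 * √c) * (1 / √n) := by rw [sqrt_mul (by positivity)]; field_simp
    _ ≤ 1 / (2 * √c) * √(log n / n) := by gcongr; exact inv_sqrt_le_sqrt_log_div hn

/-- for occupation numbers `η` of total mass `2n` whose `ε`-signed sum is
at most `n^{1/2+δ₃}` in absolute value, the return probability integral
`(1/2π) ∫_{-π}^{π} ∏_y χ(θ ε_y)^{η(y)} dθ` is `O(√(log n / n))`. -/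
theorem fourier_return_integral_bound
    (p q : ℝ) (hp : 0 < p) (hp1 : p < 1) (hq : q = 1 - p)
    (δ₃ : ℝ) (hδ₃ : 0 < δ₃) :
    ∃ C : ℝ, 0 < C ∧ ∃ N : ℕ, ∀ n ≥ N,
      ∀ η : ℤ →₀ ℕ, (∑ y ∈ η.support, η y = 2 * n) →
      ∀ ε : ℤ → ℤ, (∀ y, ε y = 1 ∨ ε y = -1) →
        (|((∑ y ∈ η.support, ε y * (η y : ℤ) : ℤ) : ℝ)| ≤ (n : ℝ) ^ ((1 : ℝ)/2 + δ₃)) →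
        ‖(1 / (2 * (π : ℂ))) *
            ∫ θ in (-π : ℝ)..π, ∏ y ∈ η.support, (geomChar p q (θ * (ε y : ℝ))) ^ (η y)‖
          ≤ C * Real.sqrt (Real.log n / n) :=
  fourier_return_integral_bound_general p q hp hp1 hq δ₃
end

section
/- If the sampled embedded walk (X_{σ_n})_{n∈N} is transient in the sense that sup_{x∈Z} ∑_n P(X_{σ_n} = x | F∨G) ≤ C < ∞, and Z is an independent geometric random variable of parameter p, then ∑_n P(∃x ≥ 1 : X_{σ_n} = x and Z ≥ x | F∨G) ≤ Cq/(1-q) < ∞, and hence the two-dimensional walk (M_n) is transient. -/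
open MeasureTheory ProbabilityTheory

/-! Split the event according to the value `x ≥ 1` taken by `W n`. By independence the piece
with value `x` has probability `P(W n = x) q^x`; exchanging the sums over `n` and `x`, the
transience bound `∑_n P(W n = x) ≤ C` leaves `C ∑_{x ≥ 1} q^x = C q / (1 - q)`. -/

lemma ProbabilityTheory.IndepFun.measure_eq_and_le_eq_mul {Ω α : Type*} [MeasurableSpace Ω]
    {μ : Measure Ω} [MeasurableSpace α] [MeasurableSingletonClass α] {X : Ω → α} {Z : Ω → ℕ}
    (h : IndepFun X Z μ) (a : α) (x : ℕ) :
    μ {ω | X ω = a ∧ x ≤ Z ω} = μ {ω | X ω = a} * μ {ω | x ≤ Z ω} :=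
  h.measure_inter_preimage_eq_mul {a} (Set.Ici x) (measurableSet_singleton a) measurableSet_Ici

lemma ProbabilityTheory.IndepFun.measure_exists_pos_eq_le_le_tsum {Ω : Type*}
    [MeasurableSpace Ω] {μ : Measure Ω} {X : Ω → ℤ} {Z : Ω → ℕ} (h : IndepFun X Z μ) :
    μ {ω | ∃ x : ℕ, 1 ≤ x ∧ X ω = x ∧ x ≤ Z ω}
      ≤ ∑' x : ℕ, μ {ω | X ω = ((x + 1 : ℕ) : ℤ)} * μ {ω | x + 1 ≤ Z ω} := by
  have hcover : {ω | ∃ x : ℕ, 1 ≤ x ∧ X ω = x ∧ x ≤ Z ω}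
      ⊆ ⋃ x : ℕ, {ω | X ω = ((x + 1 : ℕ) : ℤ) ∧ x + 1 ≤ Z ω} := by
    rintro ω ⟨x, hx, hXx, hZx⟩
    obtain ⟨y, rfl⟩ := Nat.exists_eq_add_of_le' hx
    exact Set.mem_iUnion.2 ⟨y, hXx, hZx⟩
  calc μ {ω | ∃ x : ℕ, 1 ≤ x ∧ X ω = x ∧ x ≤ Z ω}
      ≤ ∑' x : ℕ, μ {ω | X ω = ((x + 1 : ℕ) : ℤ) ∧ x + 1 ≤ Z ω} :=
        (measure_mono hcover).trans (measure_iUnion_le _)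
    _ = _ := tsum_congr fun x => h.measure_eq_and_le_eq_mul _ _

lemma ENNReal.tsum_tsum_mul_le_of_tsum_le {ι κ : Type*} {a : ι → κ → ENNReal} {b : κ → ENNReal}
    {c : ENNReal} (ha : ∀ x, ∑' n, a n x ≤ c) :
    ∑' n, ∑' x, a n x * b x ≤ c * ∑' x, b x := by
  calc ∑' n, ∑' x, a n x * b x = ∑' x, (∑' n, a n x) * b x := by
        rw [ENNReal.tsum_comm]
        exact tsum_congr fun x => ENNReal.tsum_mul_right
    _ ≤ ∑' x, c * b x := ENNReal.tsum_le_tsum fun x => mul_le_mul_left (ha x) _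
    _ = c * ∑' x, b x := ENNReal.tsum_mul_left

lemma ENNReal.tsum_ofReal_pow_succ {q : ℝ} (hq0 : 0 ≤ q) (hq1 : q < 1) :
    ∑' x : ℕ, ENNReal.ofReal (q ^ (x + 1)) = ENNReal.ofReal (q / (1 - q)) := by
  have hsum : HasSum (fun x : ℕ => q ^ (x + 1)) (q / (1 - q)) := by
    simpa only [pow_succ', div_eq_mul_inv] using (hasSum_geometric_of_lt_one hq0 hq1).mul_left q
  rw [← ENNReal.ofReal_tsum_of_nonneg (fun x => pow_nonneg hq0 _) hsum.summable, hsum.tsum_eq]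

theorem straddle_series_bound_general
    {Ω : Type*} [MeasurableSpace Ω] (μ : Measure Ω)
    (p q : ℝ) (hp : 0 < p) (hp1 : p < 1) (hq : q = 1 - p)
    (W : ℕ → Ω → ℤ) (Z : Ω → ℕ)
    (hZindep : ∀ n, IndepFun (W n) Z μ)
    (hZtail : ∀ x : ℕ, μ {ω | x ≤ Z ω} = ENNReal.ofReal (q ^ x))
    (C : ℝ) (hC : 0 ≤ C)
    (htrans : ∀ x : ℤ, (∑' n : ℕ, μ {ω | W n ω = x}) ≤ ENNReal.ofReal C) :
    (∑' n : ℕ, μ {ω | ∃ x : ℕ, 1 ≤ x ∧ W n ω = (x : ℤ) ∧ x ≤ Z ω})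
      ≤ ENNReal.ofReal (C * q / (1 - q)) := by
  calc (∑' n : ℕ, μ {ω | ∃ x : ℕ, 1 ≤ x ∧ W n ω = (x : ℤ) ∧ x ≤ Z ω})
      ≤ ∑' n : ℕ, ∑' x : ℕ,
          μ {ω | W n ω = ((x + 1 : ℕ) : ℤ)} * ENNReal.ofReal (q ^ (x + 1)) :=
        ENNReal.tsum_le_tsum fun n => by
          simpa only [hZtail] using (hZindep n).measure_exists_pos_eq_le_le_tsum
    _ ≤ ENNReal.ofReal C * ∑' x : ℕ, ENNReal.ofReal (q ^ (x + 1)) :=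
        ENNReal.tsum_tsum_mul_le_of_tsum_le fun x => htrans _
    _ = ENNReal.ofReal (C * q / (1 - q)) := by
        rw [ENNReal.tsum_ofReal_pow_succ (by linarith) (by linarith), ← ENNReal.ofReal_mul hC,
          mul_div_assoc]

/-- if the sampled embedded walk `(X_{σ_n})` (here `W n`) is transient in
the sense that `sup_x ∑_n P(W n = x) ≤ C`, and `Z` is an independent geometric random
variable with `P(Z ≥ x) = q^x`, then `∑_n P(∃ x ≥ 1, W n = x ∧ Z ≥ x) ≤ C q/(1-q) < ∞`
(whence the transience of the two-dimensional walk `(M_n)`). -/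
theorem straddle_series_bound
    {Ω : Type*} [MeasurableSpace Ω] (μ : Measure Ω) [IsProbabilityMeasure μ]
    (p q : ℝ) (hp : 0 < p) (hp1 : p < 1) (hq : q = 1 - p)
    (W : ℕ → Ω → ℤ) (Z : Ω → ℕ)
    (hWmeas : ∀ n, Measurable (W n)) (hZmeas : Measurable Z)
    (hZindep : ∀ n, IndepFun (W n) Z μ)
    (hZtail : ∀ x : ℕ, μ {ω | x ≤ Z ω} = ENNReal.ofReal (q ^ x))
    (C : ℝ) (hC : 0 ≤ C)
    (htrans : ∀ x : ℤ, (∑' n : ℕ, μ {ω | W n ω = x}) ≤ ENNReal.ofReal C) :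
    (∑' n : ℕ, μ {ω | ∃ x : ℕ, 1 ≤ x ∧ W n ω = (x : ℤ) ∧ x ≤ Z ω})
      ≤ ENNReal.ofReal (C * q / (1 - q)) :=
  straddle_series_bound_general μ p q hp hp1 hq W Z hZindep hZtail C hC htrans
end
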